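/- Let A be a unital prime complex *-algebra with a nontrivial projection p₁, set p₂ = 1 − p₁ and A_ij = p_i A p_j for i, j ∈ {1,2}, let B be a complex *-algebra, and let Φ : A → B be a bijective mapping satisfying Φ(xy + yx*) = Φ(x)Φ(y) + Φ(y)Φ(x)* for all x, y ∈ A. Then for arbitrary elements a₁₁, b₁₁ ∈ A₁₁ and c₂₂, d₂₂ ∈ A₂₂: (i) Φ(a₁₁ + b₁₁) = Φ(a₁₁) + Φ(b₁₁), and (ii) Φ(c₂₂ + d₂₂) = Φ(c₂₂) + Φ(d₂₂). -/

import Mathlib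

/-!
Write `x ⋄ y = x y + y x*`, so that `Φ (x ⋄ y) = Φ x ⋄ Φ y`. Since `⋄` is additive in each
variable, `Φ t = Φ a + Φ b` implies `Φ (s ⋄ t) = Φ (s ⋄ a) + Φ (s ⋄ b)` and
`Φ (t ⋄ s) = Φ (a ⋄ s) + Φ (b ⋄ s)` for every `s`. Testing with `s = p, q, i p, p - q`, whose
products with the Peirce corners are explicit, and using injectivity, one reads off every corner
of `t`. This gives additivity on `A₁₂ + A₂₁`, then on `A₁₁ + A₁₂ + A₂₁`, and evaluating `Φ` on
`(p + y) ⋄ (q + w)` for `y, w ∈ A₁₂` gives additivity on `A₁₂`. For `a, b ∈ A₁₁` the test `q`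
puts `t` in `A₁₁`, and the tests `p g q` give `(t - a - b) g q = 0` for all `g`, so `t = a + b`
by primeness. Everything is symmetric in `p` and `q = 1 - p`, which yields the `A₂₂` half.
-/

section JordanStarProd

variable {R : Type*}

def jordanStarProd [Mul R] [Add R] [Star R] (x y : R) : R := x * y + y * star x

infixl:70 " ⋄ " => jordanStarProd

variable [NonUnitalNonAssocSemiring R] [StarRing R]

lemma zero_jordanStarProd (x : R) : 0 ⋄ x = 0 := by
  simp [jordanStarProd]

lemma jordanStarProd_zero (x : R) : x ⋄ 0 = 0 := by
  simp [jordanStarProd]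

lemma jordanStarProd_add (x y z : R) : x ⋄ (y + z) = x ⋄ y + x ⋄ z := by
  simp only [jordanStarProd, mul_add, add_mul]
  abel

lemma add_jordanStarProd (x y z : R) : (x + y) ⋄ z = x ⋄ z + y ⋄ z := by
  simp only [jordanStarProd, star_add, mul_add, add_mul]
  abel

end JordanStarProd

lemma eq_of_add_self_eq_add_self {M : Type*} [AddCommGroup M] [Module ℂ M] {x y : M}
    (h : x + x = y + y) : x = y :=
  smul_right_injective M (two_ne_zero (α := ℂ)) <| by simpa only [two_smul] using h

structure IsPeircePair {A : Type*} [Ring A] [StarRing A] (p q : A) : Prop where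
  isStarProjection : IsStarProjection p
  add_eq_one : p + q = 1

namespace IsPeircePair

variable {A : Type*} [Ring A] [StarRing A] {p q : A} (P : IsPeircePair p q)
include P

lemma eq_one_sub : q = 1 - p := eq_sub_of_add_eq' P.add_eq_one

lemma symm : IsPeircePair q p where
  isStarProjection := P.eq_one_sub ▸ P.isStarProjection.one_sub
  add_eq_one := by rw [add_comm, P.add_eq_one]

-- A single conjunction, so that `simp [mul_assoc, P.mul_table]` normalises Peirce products.
lemma mul_table :
    (p * p = p ∧ p * q = 0 ∧ q * p = 0 ∧ q * q = q) ∧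
    (∀ x, p * (p * x) = p * x ∧ p * (q * x) = 0 ∧ q * (p * x) = 0 ∧ q * (q * x) = q * x) ∧
    star p = p ∧ star q = q := by
  have hp := P.isStarProjection
  have hq := P.symm.isStarProjection
  have hpq : p * q = 0 := P.eq_one_sub ▸ hp.mul_one_sub_self
  have hqp : q * p = 0 := P.eq_one_sub ▸ hp.one_sub_mul_self
  refine ⟨⟨hp.isIdempotentElem, hpq, hqp, hq.isIdempotentElem⟩, fun x => ?_,
    hp.isSelfAdjoint, hq.isSelfAdjoint⟩
  simp only [← mul_assoc, hp.isIdempotentElem.eq, hq.isIdempotentElem.eq, hpq, hqp, zero_mul,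
    and_self]

lemma eq_of_corners {t t' : A} (h₁₁ : p * t * p = p * t' * p) (h₁₂ : p * t * q = p * t' * q)
    (h₂₁ : q * t * p = q * t' * p) (h₂₂ : q * t * q = q * t' * q) : t = t' := by
  have decomp (x : A) : x = p * x * p + p * x * q + q * x * p + q * x * q := by
    have : x = (p + q) * x * (p + q) := by rw [P.add_eq_one, one_mul, mul_one]
    conv_lhs => rw [this]
    noncomm_ring
  rw [decomp t, decomp t', h₁₁, h₁₂, h₂₁, h₂₂]

end IsPeircePair

section TestElements

variable {A B : Type*} [NonUnitalNonAssocSemiring A] [StarRing A]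
  [NonUnitalNonAssocSemiring B] [StarRing B] {Φ : A → B}
  (hmul : ∀ x y, Φ (x ⋄ y) = Φ x ⋄ Φ y)
include hmul

lemma map_zero_of_surjective (hsurj : Function.Surjective Φ) : Φ 0 = 0 := by
  obtain ⟨y, hy⟩ := hsurj 0
  rw [← zero_jordanStarProd y, hmul, hy, jordanStarProd_zero]

lemma map_jordanStarProd_left_of_map_eq_add {t a b : A} (ht : Φ t = Φ a + Φ b) (s : A) :
    Φ (s ⋄ t) = Φ (s ⋄ a) + Φ (s ⋄ b) := by
  rw [hmul, ht, jordanStarProd_add, hmul, hmul]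

lemma map_jordanStarProd_right_of_map_eq_add {t a b : A} (ht : Φ t = Φ a + Φ b) (s : A) :
    Φ (t ⋄ s) = Φ (a ⋄ s) + Φ (b ⋄ s) := by
  rw [hmul, ht, add_jordanStarProd, hmul, hmul]

lemma jordanStarProd_left_eq_of_map_eq_add (hΦ : Function.Bijective Φ) {t a b s : A}
    (ht : Φ t = Φ a + Φ b) (hb : s ⋄ b = 0) : s ⋄ t = s ⋄ a :=
  hΦ.1 <| by rw [map_jordanStarProd_left_of_map_eq_add hmul ht, hb,
    map_zero_of_surjective hmul hΦ.2, add_zero]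

lemma jordanStarProd_right_eq_of_map_eq_add (hΦ : Function.Bijective Φ) {t a b s : A}
    (ht : Φ t = Φ a + Φ b) (hb : b ⋄ s = 0) : t ⋄ s = a ⋄ s :=
  hΦ.1 <| by rw [map_jordanStarProd_right_of_map_eq_add hmul ht, hb,
    map_zero_of_surjective hmul hΦ.2, add_zero]

end TestElements

section PeirceAdditivity

variable {A B : Type*} [Ring A] [StarRing A] [NonUnitalNonAssocRing B] [StarRing B]
  {Φ : A → B} (hΦ : Function.Bijective Φ) (hmul : ∀ x y, Φ (x ⋄ y) = Φ x ⋄ Φ y)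
  {p q : A} (P : IsPeircePair p q)
include hΦ hmul P

lemma map_corner₁₂_add_corner₂₁ (u v : A) :
    Φ (p * u * q + q * v * p) = Φ (p * u * q) + Φ (q * v * p) := by
  obtain ⟨t, ht⟩ := hΦ.2 (Φ (p * u * q) + Φ (q * v * p))
  suffices t = p * u * q + q * v * p by rw [← this, ht]
  have hpt : p ⋄ t = t := hΦ.1 <| by
    rw [map_jordanStarProd_left_of_map_eq_add hmul ht, ht]
    simp [jordanStarProd, mul_assoc, P.mul_table]
  have htp : t ⋄ p = q * v * p ⋄ p :=
    jordanStarProd_right_eq_of_map_eq_add hmul hΦ (ht.trans (add_comm _ _)) <| by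
      simp [jordanStarProd, mul_assoc, star_mul, P.mul_table]
  have htq : t ⋄ q = p * u * q ⋄ q :=
    jordanStarProd_right_eq_of_map_eq_add hmul hΦ ht <| by
      simp [jordanStarProd, mul_assoc, star_mul, P.mul_table]
  apply P.eq_of_corners
  · simpa [jordanStarProd, mul_add, add_mul, mul_assoc, P.mul_table] using congr(p * $hpt * p)
  · simpa [jordanStarProd, mul_add, add_mul, mul_assoc, star_mul, P.mul_table]
      using congr(p * $htq * q)
  · simpa [jordanStarProd, mul_add, add_mul, mul_assoc, star_mul, P.mul_table]
      using congr(q * $htp * p)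
  · simpa [jordanStarProd, mul_add, add_mul, mul_assoc, P.mul_table]
      using congr(q * $hpt * q).symm

variable [Algebra ℂ A] [StarModule ℂ A]

lemma map_corner₁₁_add_corner₁₂_add_corner₂₁ (x y z : A) :
    Φ (p * x * p + p * y * q + q * z * p) = Φ (p * x * p) + Φ (p * y * q) + Φ (q * z * p) := by
  rw [add_assoc, add_assoc, ← map_corner₁₂_add_corner₂₁ hΦ hmul P]
  obtain ⟨t, ht⟩ := hΦ.2 (Φ (p * x * p) + Φ (p * y * q + q * z * p))
  suffices t = p * x * p + (p * y * q + q * z * p) by rw [← this, ht]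
  -- `(i p) ⋄ s = i (p s - s p)` separates `A₁₂` from `A₂₁`.
  have hIpt : (Complex.I • p) ⋄ t = (Complex.I • p) ⋄ (p * y * q + q * z * p) :=
    jordanStarProd_left_eq_of_map_eq_add hmul hΦ (ht.trans (add_comm _ _)) <| by
      simp [jordanStarProd, mul_assoc, star_smul, P.mul_table]
  have hqt : q ⋄ t = q ⋄ (p * y * q + q * z * p) :=
    jordanStarProd_left_eq_of_map_eq_add hmul hΦ (ht.trans (add_comm _ _)) <| by
      simp [jordanStarProd, mul_assoc, P.mul_table]
  have hpqt : (p - q) ⋄ t = (p - q) ⋄ (p * x * p) :=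
    jordanStarProd_left_eq_of_map_eq_add hmul hΦ ht <| by
      simp only [jordanStarProd, mul_assoc, mul_add, sub_mul, P.mul_table, sub_zero, zero_sub,
        star_sub, mul_sub, add_mul, mul_zero, zero_add, add_zero]
      abel
  apply P.eq_of_corners
  · refine eq_of_add_self_eq_add_self ?_
    simpa [jordanStarProd, mul_add, add_mul, mul_sub, sub_mul, mul_assoc, P.mul_table]
      using congr(p * $hpqt * p)
  · simpa [jordanStarProd, mul_add, add_mul, mul_assoc, star_smul, P.mul_table]
      using congr(p * $hIpt * q)
  · simpa [jordanStarProd, mul_add, add_mul, mul_assoc, star_smul, P.mul_table]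
      using congr(q * $hIpt * p)
  · refine eq_of_add_self_eq_add_self ?_
    simpa [jordanStarProd, mul_add, add_mul, mul_assoc, P.mul_table] using congr(q * $hqt * q)

lemma map_corner₁₂_add_corner₁₂ (u v : A) :
    Φ (p * u * q + p * v * q) = Φ (p * u * q) + Φ (p * v * q) := by
  have h0 := map_zero_of_surjective hmul hΦ.2
  have hX : Φ (p + p * v * q) = Φ p + Φ (p * v * q) := by
    simpa [P.mul_table, h0] using map_corner₁₁_add_corner₁₂_add_corner₂₁ hΦ hmul P 1 v 0
  have hZ : Φ (q + p * u * q) = Φ q + Φ (p * u * q) := by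
    simpa [P.mul_table, h0] using map_corner₁₁_add_corner₁₂_add_corner₂₁ hΦ hmul P.symm 1 0 u
  have hXZ : (p + p * v * q) ⋄ (q + p * u * q)
      = p * (u * q * star v) * p + p * (u + v) * q + q * star v * p := by
    simp only [jordanStarProd, mul_assoc, mul_add, add_mul, P.mul_table, zero_add, mul_zero,
      add_zero, star_add, star_mul]
    abel
  have hpq : p ⋄ q = 0 := by simp [jordanStarProd, P.mul_table]
  have hpw : p ⋄ (p * u * q) = p * u * q := by simp [jordanStarProd, mul_assoc, P.mul_table]
  have hyq : p * v * q ⋄ q = p * v * q + q * star v * p := by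
    simp [jordanStarProd, mul_assoc, star_mul, P.mul_table]
  have hyw : p * v * q ⋄ (p * u * q) = p * (u * q * star v) * p := by
    simp [jordanStarProd, mul_assoc, star_mul, P.mul_table]
  have lhs : Φ ((p + p * v * q) ⋄ (q + p * u * q))
      = Φ (p * (u * q * star v) * p) + Φ (p * (u + v) * q) + Φ (q * star v * p) := by
    rw [hXZ, map_corner₁₁_add_corner₁₂_add_corner₂₁ hΦ hmul P]
  have rhs : Φ ((p + p * v * q) ⋄ (q + p * u * q))
      = Φ (p * u * q) + (Φ (p * v * q) + Φ (q * star v * p) + Φ (p * (u * q * star v) * p)) := by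
    rw [hmul, hX, hZ, add_jordanStarProd, jordanStarProd_add, jordanStarProd_add, ← hmul, ← hmul,
      ← hmul, ← hmul, hpq, hpw, hyq, hyw, h0, zero_add, map_corner₁₂_add_corner₂₁ hΦ hmul P]
  have key := lhs.symm.trans rhs
  rw [← sub_eq_zero] at key ⊢
  rw [← key, ← add_mul, ← mul_add]
  abel

lemma map_corner₁₁_add_corner₁₁ (hprime : ∀ a b : A, (∀ x, a * x * b = 0) → a = 0 ∨ b = 0)
    (hq : q ≠ 0) (u v : A) : Φ (p * u * p + p * v * p) = Φ (p * u * p) + Φ (p * v * p) := by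
  obtain ⟨t, ht⟩ := hΦ.2 (Φ (p * u * p) + Φ (p * v * p))
  suffices t = p * u * p + p * v * p by rw [← this, ht]
  have hqt : q ⋄ t = q ⋄ (p * u * p) :=
    jordanStarProd_left_eq_of_map_eq_add hmul hΦ ht <| by
      simp [jordanStarProd, mul_assoc, P.mul_table]
  have ht₁₁ : t = p * t * p := by
    apply P.eq_of_corners
    · simp [mul_assoc, P.mul_table]
    · simpa [jordanStarProd, mul_add, add_mul, mul_assoc, P.mul_table] using congr(p * $hqt * q)
    · simpa [jordanStarProd, mul_add, add_mul, mul_assoc, P.mul_table] using congr(q * $hqt * p)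
    · refine eq_of_add_self_eq_add_self ?_
      simpa [jordanStarProd, mul_add, add_mul, mul_assoc, P.mul_table] using congr(q * $hqt * q)
  have htest (g : A) :
      p * t * p ⋄ (p * g * q) = (p * u * p + p * v * p) ⋄ (p * g * q) := hΦ.1 <| by
    have hx (x : A) : p * x * p ⋄ (p * g * q) = p * (x * p * g) * q := by
      simp [jordanStarProd, mul_assoc, star_mul, P.mul_table]
    rw [← ht₁₁, map_jordanStarProd_right_of_map_eq_add hmul ht, add_jordanStarProd, hx, hx,
      map_corner₁₂_add_corner₁₂ hΦ hmul P]
  have hsep (g : A) : (p * t * p - (p * u * p + p * v * p)) * g * q = 0 := by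
    simpa [jordanStarProd, mul_add, add_mul, sub_mul, mul_assoc, star_mul, star_add, P.mul_table,
      sub_eq_zero] using congr(p * $(htest g) * q)
  rcases hprime _ _ hsep with h | h
  · rw [ht₁₁]
    exact sub_eq_zero.mp h
  · exact absurd h hq

end PeirceAdditivity

theorem stmt_19_general {A B : Type*}
    [Ring A] [Algebra ℂ A] [StarRing A] [StarModule ℂ A]
    [Ring B] [StarRing B]
    (hAprime : ∀ a b : A, (∀ x : A, a * x * b = 0) → a = 0 ∨ b = 0)
    (p₁ p₂ : A) (hp₁0 : p₁ ≠ 0) (hp₁1 : p₁ ≠ 1) (hp₁sa : star p₁ = p₁)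
    (hp₁idem : p₁ * p₁ = p₁) (hp₂ : p₂ = 1 - p₁)
    (Φ : A → B) (hΦ : Function.Bijective Φ)
    (h : ∀ x y : A, Φ (x * y + y * star x) = Φ x * Φ y + Φ y * star (Φ x))
    (a₁₁ b₁₁ c₂₂ d₂₂ : A)
    (ha : a₁₁ = p₁ * a₁₁ * p₁) (hb : b₁₁ = p₁ * b₁₁ * p₁)
    (hc : c₂₂ = p₂ * c₂₂ * p₂) (hd : d₂₂ = p₂ * d₂₂ * p₂) :
    Φ (a₁₁ + b₁₁) = Φ a₁₁ + Φ b₁₁ ∧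
    Φ (c₂₂ + d₂₂) = Φ c₂₂ + Φ d₂₂ := by
  have P : IsPeircePair p₁ p₂ := ⟨⟨hp₁idem, hp₁sa⟩, by rw [hp₂, add_sub_cancel]⟩
  have hp₂0 : p₂ ≠ 0 := by
    rw [hp₂]
    exact sub_ne_zero.mpr hp₁1.symm
  constructor
  · rw [ha, hb]
    exact map_corner₁₁_add_corner₁₁ hΦ h P hAprime hp₂0 a₁₁ b₁₁
  · rw [hc, hd]
    exact map_corner₁₁_add_corner₁₁ hΦ h P.symm hAprime hp₁0 c₂₂ d₂₂

/-- Claim 2.7: additivity within diagonal Peirce corners.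
Membership a ∈ A_ij = pᵢ A pⱼ is expressed as a = pᵢ * a * pⱼ. -/
theorem stmt_19 {A B : Type*}
    [Ring A] [Algebra ℂ A] [StarRing A] [StarModule ℂ A]
    [Ring B] [Algebra ℂ B] [StarRing B] [StarModule ℂ B]
    (hAprime : ∀ a b : A, (∀ x : A, a * x * b = 0) → a = 0 ∨ b = 0)
    (p₁ p₂ : A) (hp₁0 : p₁ ≠ 0) (hp₁1 : p₁ ≠ 1) (hp₁sa : star p₁ = p₁)
    (hp₁idem : p₁ * p₁ = p₁) (hp₂ : p₂ = 1 - p₁)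
    (Φ : A → B) (hΦ : Function.Bijective Φ)
    (h : ∀ x y : A, Φ (x * y + y * star x) = Φ x * Φ y + Φ y * star (Φ x))
    (a₁₁ b₁₁ c₂₂ d₂₂ : A)
    (ha : a₁₁ = p₁ * a₁₁ * p₁) (hb : b₁₁ = p₁ * b₁₁ * p₁)
    (hc : c₂₂ = p₂ * c₂₂ * p₂) (hd : d₂₂ = p₂ * d₂₂ * p₂) :
    Φ (a₁₁ + b₁₁) = Φ a₁₁ + Φ b₁₁ ∧
    Φ (c₂₂ + d₂₂) = Φ c₂₂ + Φ d₂₂ :=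
  stmt_19_general hAprime p₁ p₂ hp₁0 hp₁1 hp₁sa hp₁idem hp₂ Φ hΦ h a₁₁ b₁₁ c₂₂ d₂₂ ha hb hc hd
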